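/- arXiv:2603.09664 — 2 statements merged into one kernel-verified Lean document; each statement's English description precedes it below -/
import Mathlib

section
/- Let 0 < a0 ≤ a1, c = a0 + a1, and X = P(O_{P^2}(a0) ⊕ O_{P^2}(a1)). Suppose the line bundle O_X(aH + bF) is Ulrich on X with respect to O_X(H). Then a0 = a1 = 1 and (a, b) equals (0, 1) or (2, −2). -/
/-- `hP2 m i` is the dimension of `H^i(ℙ², O(m))` over an algebraically closed field of
characteristic zero (given by the classical formulas; cohomology in degrees outside
`{0, 1, 2}`, including negative ones, vanishes). -/
def hP2 (m i : ℤ) : ℕ :=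
  if i = 0 ∧ 0 ≤ m then ((m + 1) * (m + 2) / 2).toNat
  else if i = 2 ∧ m ≤ -3 then ((m + 1) * (m + 2) / 2).toNat
  else 0

/-- `hX a0 a1 a b i` is the dimension of `H^i(X, O_X(aH + bF))` for the projective bundle
`X = ℙ(O(a0) ⊕ O(a1))` over `ℙ²` with tautological class `H` and fibre class `F`,
computed through the projection `π` (Hartshorne, Exercise III.8.4):
for `a ≥ 0` it is `h^i(ℙ², Sym^a(O(a0) ⊕ O(a1)) ⊗ O(b))`, for `a = -1` it vanishes, and
for `a < -1` it is `h^{3-i}(ℙ², Sym^{-a-2}(O(a0) ⊕ O(a1)) ⊗ O(c - b - 3))`, `c = a0 + a1`. -/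
def hX (a0 a1 a b i : ℤ) : ℕ :=
  if 0 ≤ a then
    ∑ j ∈ Finset.range (a.toNat + 1), hP2 (b + j * a0 + (a - j) * a1) i
  else if a = -1 then 0
  else
    ∑ j ∈ Finset.range ((-a - 2).toNat + 1),
      hP2 ((a0 + a1) - b - 3 + j * a0 + ((-a - 2) - j) * a1) (3 - i)

lemma hP2_zero0 {m : ℤ} (h : hP2 m 0 = 0) : m < 0 := by
  by_contra hm
  push_neg at hm
  unfold hP2 at h
  rw [if_pos ⟨rfl, hm⟩] at h
  have h2 : (2:ℤ) ≤ (m + 1) * (m + 2) := by nlinarith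
  set x := (m + 1) * (m + 2) with hx
  omega

lemma hP2_zero2 {m : ℤ} (h : hP2 m 2 = 0) : -2 ≤ m := by
  by_contra hm
  push_neg at hm
  unfold hP2 at h
  rw [if_neg (by simp), if_pos ⟨rfl, by omega⟩] at h
  have h2 : (2:ℤ) ≤ (m + 1) * (m + 2) := by nlinarith
  set x := (m + 1) * (m + 2) with hx
  omega

lemma hX_term {a0 a1 a' b i : ℤ} (ha : 0 ≤ a') (k : ℕ) (hk : (k:ℤ) ≤ a')
    (h : hX a0 a1 a' b i = 0) : hP2 (b + k * a0 + (a' - k) * a1) i = 0 := by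
  unfold hX at h
  rw [if_pos ha] at h
  exact (Finset.sum_eq_zero_iff.mp h) k (Finset.mem_range.mpr (by omega))

lemma hX_term_neg {a0 a1 a' b i : ℤ} (ha : a' ≤ -2) (k : ℕ) (hk : (k:ℤ) ≤ -a' - 2)
    (h : hX a0 a1 a' b i = 0) :
    hP2 ((a0 + a1) - b - 3 + k * a0 + ((-a' - 2) - k) * a1) (3 - i) = 0 := by
  unfold hX at h
  rw [if_neg (by omega), if_neg (by omega)] at h
  exact (Finset.sum_eq_zero_iff.mp h) k (Finset.mem_range.mpr (by omega))

/-- Let `0 < a0 ≤ a1`, `c = a0 + a1`, and `X = ℙ(O(a0) ⊕ O(a1))` over `ℙ²`.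
Suppose the line bundle `O_X(aH + bF)` is Ulrich on `X` with respect to `O_X(H)`, i.e.
`H^i(X, O_X((a-t)H + bF)) = 0` for all `i ≥ 0` and `t = 1, 2, 3`. Then `a0 = a1 = 1` and
`(a, b)` equals `(0, 1)` or `(2, -2)`. -/
theorem stmt12 (a0 a1 a b : ℤ) (h0 : 0 < a0) (h01 : a0 ≤ a1)
    (hUlrich : ∀ i t : ℤ, 0 ≤ i → (t = 1 ∨ t = 2 ∨ t = 3) → hX a0 a1 (a - t) b i = 0) :
    a0 = 1 ∧ a1 = 1 ∧ ((a = 0 ∧ b = 1) ∨ (a = 2 ∧ b = -2)) := by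
  rcases (show a ≤ -1 ∨ a = 0 ∨ a = 1 ∨ a = 2 ∨ 3 ≤ a by omega) with hA | hA | hA | hA | hA
  · -- a ≤ -1 : contradiction
    exfalso
    have e1 := hX_term_neg (a0 := a0) (a1 := a1) (b := b) (show a - 1 ≤ -2 by omega) 0
      (by omega) (hUlrich 1 1 (by norm_num) (by norm_num))
    have e3 := hX_term_neg (a0 := a0) (a1 := a1) (b := b) (show a - 3 ≤ -2 by omega) 0
      (by omega) (hUlrich 3 3 (by norm_num) (by norm_num))
    norm_num at e1 e3
    have f1 := hP2_zero2 e1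
    have f3 := hP2_zero0 e3
    nlinarith [f1, f3, h0, h01]
  · -- a = 0
    subst hA
    have e2a := hX_term_neg (a0 := a0) (a1 := a1) (b := b) (show (0:ℤ) - 2 ≤ -2 by omega) 0
      (by omega) (hUlrich 3 2 (by norm_num) (by norm_num))
    have e2b := hX_term_neg (a0 := a0) (a1 := a1) (b := b) (show (0:ℤ) - 2 ≤ -2 by omega) 0
      (by omega) (hUlrich 1 2 (by norm_num) (by norm_num))
    have e3a := hX_term_neg (a0 := a0) (a1 := a1) (b := b) (show (0:ℤ) - 3 ≤ -2 by omega) 0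
      (by omega) (hUlrich 3 3 (by norm_num) (by norm_num))
    have e3b := hX_term_neg (a0 := a0) (a1 := a1) (b := b) (show (0:ℤ) - 3 ≤ -2 by omega) 1
      (by omega) (hUlrich 3 3 (by norm_num) (by norm_num))
    norm_num at e2a e2b e3a e3b
    have f2a := hP2_zero0 e2a
    have f2b := hP2_zero2 e2b
    have f3a := hP2_zero0 e3a
    have f3b := hP2_zero0 e3b
    omega
  · -- a = 1 : contradiction
    exfalso
    subst hA
    have e1 := hX_term (a0 := a0) (a1 := a1) (b := b) (show (0:ℤ) ≤ 1 - 1 by omega) 0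
      (by omega) (hUlrich 0 1 (by norm_num) (by norm_num))
    have e3 := hX_term_neg (a0 := a0) (a1 := a1) (b := b) (show (1:ℤ) - 3 ≤ -2 by omega) 0
      (by omega) (hUlrich 3 3 (by norm_num) (by norm_num))
    norm_num at e1 e3
    have f1 := hP2_zero0 e1
    have f3 := hP2_zero0 e3
    omega
  · -- a = 2
    subst hA
    have e2 := hX_term (a0 := a0) (a1 := a1) (b := b) (show (0:ℤ) ≤ 2 - 2 by omega) 0
      (by omega) (hUlrich 2 2 (by norm_num) (by norm_num))
    have e1a := hX_term (a0 := a0) (a1 := a1) (b := b) (show (0:ℤ) ≤ 2 - 1 by omega) 0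
      (by omega) (hUlrich 0 1 (by norm_num) (by norm_num))
    have e1b := hX_term (a0 := a0) (a1 := a1) (b := b) (show (0:ℤ) ≤ 2 - 1 by omega) 1
      (by omega) (hUlrich 0 1 (by norm_num) (by norm_num))
    norm_num at e2 e1a e1b
    have f2 := hP2_zero2 e2
    have f1a := hP2_zero0 e1a
    have f1b := hP2_zero0 e1b
    omega
  · -- 3 ≤ a : contradiction
    exfalso
    have e1 := hX_term (a0 := a0) (a1 := a1) (b := b) (show (0:ℤ) ≤ a - 1 by omega) 0
      (by omega) (hUlrich 0 1 (by norm_num) (by norm_num))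
    have e3 := hX_term (a0 := a0) (a1 := a1) (b := b) (show (0:ℤ) ≤ a - 3 by omega) 0
      (by omega) (hUlrich 2 3 (by norm_num) (by norm_num))
    norm_num at e1 e3
    have f1 := hP2_zero0 e1
    have f3 := hP2_zero2 e3
    nlinarith [f1, f3, h0, h01]
end

section
/- Let 0 < a0 ≤ a1, c = a0 + a1, X = P(O_{P^2}(a0) ⊕ O_{P^2}(a1)) with projection π, and let G be a vector bundle on P^2. If π^*G ⊗ O_X(bF) is Ulrich on X with respect to O_X(H) for some integer b, then a0 = a1. -/
/-- `hXG a0 a1 g gd a b i` is the dimension of `H^i(X, π^*G ⊗ O_X(aH + bF))` on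
`X = ℙ(O(a0) ⊕ O(a1))` over `ℙ²`, where `g t j = h^j(ℙ², G(t))` and `gd t j = h^j(ℙ², G^*(t))`
record the cohomology of the vector bundle `G` on `ℙ²` and of its dual. It is computed through
the projection (Hartshorne, Exercise III.8.4), using that `Sym^a(O(a0) ⊕ O(a1))` splits into
the line bundles `O(j·a0 + (a-j)·a1)`. -/
def hXG (a0 a1 : ℤ) (g gd : ℤ → ℤ → ℕ) (a b i : ℤ) : ℕ :=
  if 0 ≤ a then
    ∑ j ∈ Finset.range (a.toNat + 1), g (b + j * a0 + (a - j) * a1) i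
  else if a = -1 then 0
  else
    ∑ j ∈ Finset.range ((-a - 2).toNat + 1),
      gd ((a0 + a1) - b - 3 + j * a0 + ((-a - 2) - j) * a1) (3 - i)

/-- Let `0 < a0 ≤ a1`, `c = a0 + a1`, `X = ℙ(O(a0) ⊕ O(a1))` over `ℙ²` with
projection `π`, and `G` a vector bundle on `ℙ²` of positive rank `r`, recorded by its twisted
cohomology dimensions `g` and those of its dual `gd` (related by Serre duality on `ℙ²`), with
Euler characteristic `χ(G(t))` given by a Riemann–Roch polynomial of degree `2` with leading
coefficient `r/2`. If `π^*G ⊗ O_X(bF)` is Ulrich on `X` with respect to `O_X(H)` for some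
integer `b`, then `a0 = a1`. -/
theorem stmt14 (a0 a1 b : ℤ) (h0 : 0 < a0) (h01 : a0 ≤ a1) (g gd : ℤ → ℤ → ℕ)
    (hdual : ∀ m i : ℤ, gd m i = g (-m - 3) (2 - i))
    (r : ℕ) (hr : 0 < r) (x y : ℤ)
    (hRR : ∀ t : ℤ, 2 * ((g t 0 : ℤ) - g t 1 + g t 2) = (r : ℤ) * t ^ 2 + x * t + y)
    (hUlrich : ∀ i t : ℤ, 0 ≤ i → (t = 1 ∨ t = 2 ∨ t = 3) →
      hXG a0 a1 g gd (0 - t) b i = 0) :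
    a0 = a1 := by
  by_contra hne
  have ha01 : a0 < a1 := lt_of_le_of_ne h01 hne
  -- t = 2 case: g (b - (a0+a1)) k = 0 for k = 0,1,2
  have h2 : ∀ i : ℤ, 0 ≤ i → g (b - (a0 + a1)) (i - 1) = 0 := by
    intro i hi
    have h := hUlrich i 2 hi (by tauto)
    simp only [hXG] at h
    norm_num [Finset.sum_range_succ] at h
    rw [hdual] at h
    convert h using 2 <;> ring
  -- t = 3 case
  have h3 : ∀ i : ℤ, 0 ≤ i →
      g (b - (a0 + a1) - a1) (i - 1) = 0 ∧ g (b - (a0 + a1) - a0) (i - 1) = 0 := by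
    intro i hi
    have h := hUlrich i 3 hi (by tauto)
    simp only [hXG] at h
    norm_num [Finset.sum_range_succ] at h
    rw [hdual, hdual] at h
    obtain ⟨h1, h2⟩ := h
    constructor
    · convert h1 using 2 <;> ring
    · convert h2 using 2 <;> ring
  have g0 := h2 1 (by norm_num)
  have g1 := h2 2 (by norm_num)
  have g2 := h2 3 (by norm_num)
  norm_num at g0 g1 g2
  have q1 : (r:ℤ) * (b - (a0+a1))^2 + x * (b - (a0+a1)) + y = 0 := by
    have := hRR (b - (a0+a1))
    rw [g0, g1, g2] at this
    push_cast at this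
    linarith
  have ga0 := fun i hi => (h3 i hi).2
  have ga1 := fun i hi => (h3 i hi).1
  have q2 : (r:ℤ) * (b - (a0+a1) - a0)^2 + x * (b - (a0+a1) - a0) + y = 0 := by
    have := hRR (b - (a0+a1) - a0)
    have e0 := ga0 1 (by norm_num); have e1 := ga0 2 (by norm_num); have e2 := ga0 3 (by norm_num)
    norm_num at e0 e1 e2
    rw [e0, e1, e2] at this
    push_cast at this
    linarith
  have q3 : (r:ℤ) * (b - (a0+a1) - a1)^2 + x * (b - (a0+a1) - a1) + y = 0 := by
    have := hRR (b - (a0+a1) - a1)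
    have e0 := ga1 1 (by norm_num); have e1 := ga1 2 (by norm_num); have e2 := ga1 3 (by norm_num)
    norm_num at e0 e1 e2
    rw [e0, e1, e2] at this
    push_cast at this
    linarith
  have f1 : a0 * ((r:ℤ) * (2*(b - (a0+a1)) - a0) + x) = 0 := by linear_combination q1 - q2
  have f2 : a1 * ((r:ℤ) * (2*(b - (a0+a1)) - a1) + x) = 0 := by linear_combination q1 - q3
  have f1' : (r:ℤ) * (2*(b - (a0+a1)) - a0) + x = 0 :=
    (mul_eq_zero.mp f1).resolve_left h0.ne'
  have f2' : (r:ℤ) * (2*(b - (a0+a1)) - a1) + x = 0 :=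
    (mul_eq_zero.mp f2).resolve_left (h0.trans_le h01).ne'
  have : (r:ℤ) * (a1 - a0) = 0 := by linear_combination f1' - f2'
  have hrz : (0:ℤ) < r := by exact_mod_cast hr
  nlinarith
end
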